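/- Let G' be the graph constructed from bipartite G as above. If D' is a strong geodetic set of G' of size at most k + |V(G)|, then D' ∩ V(G) is a dominating set of G of size at most k. -/

import Mathlib

/-- A selection of fixed geodesics between pairs of vertices of `S`:
each element of `P` is a walk whose endpoints lie in `S`, which is a shortest path,
with at most one walk per ordered pair of endpoints, and with the walks chosen for
the two orderings of a pair being reverses of each other. -/
def IsGeodesicSelection {V : Type*} (G : SimpleGraph V) (S : Set V)
    (P : Set ((u : V) × (v : V) × G.Walk u v)) : Prop :=
  (∀ q ∈ P, q.1 ∈ S ∧ q.2.1 ∈ S ∧ q.2.2.IsPath ∧ q.2.2.length = G.dist q.1 q.2.1) ∧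
  (∀ q ∈ P, ∀ q' ∈ P,
    (q.1 = q'.1 ∧ q.2.1 = q'.2.1 → q = q') ∧
    (q.1 = q'.2.1 ∧ q.2.1 = q'.1 → q.2.2.support = q'.2.2.support.reverse))

/-- `S` is a strong geodetic set of `G` if one can fix one shortest path between
each pair of vertices of `S` so that all vertices of `G` are covered. -/
def IsStrongGeodeticSet {V : Type*} (G : SimpleGraph V) (S : Set V) : Prop :=
  ∃ P, IsGeodesicSelection G S P ∧ ∀ w : V, ∃ q ∈ P, w ∈ q.2.2.support

/-- The strong geodetic number: minimum size of a strong geodetic set. -/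
noncomputable def strongGeodeticNumber {V : Type*} (G : SimpleGraph V) : ℕ :=
  sInf {k | ∃ S : Set V, S.ncard = k ∧ IsStrongGeodeticSet G S}

/-- The vertex `u₁` in the construction `G'`. -/
def uOne {V : Type*} : V ⊕ V ⊕ Bool := Sum.inr (Sum.inr false)

/-- The vertex `u₂` in the construction `G'`. -/
def uTwo {V : Type*} : V ⊕ V ⊕ Bool := Sum.inr (Sum.inr true)

/-- The copy `v'` of a vertex `v` in the construction `G'`. -/
def copyOf {V : Type*} (v : V) : V ⊕ V ⊕ Bool := Sum.inr (Sum.inl v)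

/-- The relation generating the graph `G'` obtained from a bipartite `G` with parts `X, Y`
by adding `u₁, u₂` and copies `x'` (`x ∈ X`), `y'` (`y ∈ Y`), with edges `u₁u₂`,
`x u₂`, `u₂ x'` for `x ∈ X`, and `y u₁`, `u₁ y'` for `y ∈ Y`. -/
def gPrimeRel {V : Type*} (G : SimpleGraph V) (X Y : Set V) :
    (V ⊕ V ⊕ Bool) → (V ⊕ V ⊕ Bool) → Prop := fun a b =>
  match a, b with
  | Sum.inl u, Sum.inl v => G.Adj u v
  | Sum.inr (Sum.inr false), Sum.inr (Sum.inr true) => True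
  | Sum.inl v, Sum.inr (Sum.inr true) => v ∈ X
  | Sum.inl v, Sum.inr (Sum.inr false) => v ∈ Y
  | Sum.inr (Sum.inr true), Sum.inr (Sum.inl v) => v ∈ X
  | Sum.inr (Sum.inr false), Sum.inr (Sum.inl v) => v ∈ Y
  | _, _ => False

/-- The graph `G'` of the reduction. -/
def gPrime {V : Type*} (G : SimpleGraph V) (X Y : Set V) : SimpleGraph (V ⊕ V ⊕ Bool) :=
  SimpleGraph.fromRel (gPrimeRel G X Y)

/-!
The copies `v'` are simplicial in `G'`: their neighbours are among the two hubs
`u₁, u₂` (`Sum.inr (Sum.inr b)`), which are adjacent. So all `|V(G)|` copies lie in `D'`,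
leaving at most `k` vertices of `G` in it. Every vertex is adjacent to a hub or is one, and
each hub reaches every vertex in two steps, so `G'` has diameter at most three. A vertex `v`
of `G` outside `D'` is interior to a geodesic of length at most three between vertices of
`D'`, hence adjacent to one of its ends; if that end is a hub, the geodesic has length two and
its other end is a neighbour of `v` that is not a hub, i.e. a vertex of `G`.
-/

namespace SimpleGraph

variable {V : Type*} {G : SimpleGraph V}

theorem Walk.dist_getVert_getVert {u v : V} {p : G.Walk u v} (hp : p.length = G.dist u v)
    {i j : ℕ} (hij : i ≤ j) (hj : j ≤ p.length) :
    G.dist (p.getVert i) (p.getVert j) = j - i := by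
  have hsub := (Walk.isSubwalk_take (p.drop i) (j - i)).trans (p.isSubwalk_drop i)
  have := length_eq_dist_of_subwalk hp hsub
  rw [Walk.take_length, Walk.drop_length, Walk.drop_getVert, Nat.add_sub_cancel' hij] at this
  omega

theorem Walk.eq_or_eq_of_isClique_neighborSet {u v w : V} {p : G.Walk u v}
    (hp : p.length = G.dist u v) (hw : w ∈ p.support) (hc : G.IsClique (G.neighborSet w)) :
    w = u ∨ w = v := by
  obtain ⟨n, rfl, hn⟩ := Walk.mem_support_iff_exists_getVert.1 hw
  by_contra! hne
  have h0 : n ≠ 0 := by rintro rfl; exact hne.1 p.getVert_zero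
  have hl : n ≠ p.length := by rintro rfl; exact hne.2 p.getVert_length
  have hpred := p.adj_getVert_succ (i := n - 1) (by omega)
  have hsucc := p.adj_getVert_succ (i := n) (by omega)
  rw [Nat.sub_add_cancel (Nat.pos_of_ne_zero h0)] at hpred
  have h2 := p.dist_getVert_getVert hp (i := n - 1) (j := n + 1) (by omega) (by omega)
  by_cases hab : p.getVert (n - 1) = p.getVert (n + 1)
  · rw [hab, dist_self] at h2
    omega
  · have := dist_eq_one_iff_adj.2 (hc (show _ ∈ G.neighborSet _ from hpred.symm) hsucc hab)
    omega

end SimpleGraph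

open SimpleGraph

section StrongGeodetic

variable {V : Type*} {G : SimpleGraph V}

theorem IsStrongGeodeticSet.exists_walk {S : Set V} (hS : IsStrongGeodeticSet G S) (w : V) :
    ∃ s ∈ S, ∃ t ∈ S, ∃ p : G.Walk s t, p.length = G.dist s t ∧ w ∈ p.support := by
  obtain ⟨P, ⟨hP, -⟩, hcov⟩ := hS
  obtain ⟨⟨s, t, p⟩, hq, hw⟩ := hcov w
  obtain ⟨hs, ht, -, hlen⟩ := hP _ hq
  exact ⟨s, hs, t, ht, p, hlen, hw⟩

theorem IsStrongGeodeticSet.mem_of_isClique_neighborSet {S : Set V}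
    (hS : IsStrongGeodeticSet G S) {w : V} (hc : G.IsClique (G.neighborSet w)) : w ∈ S := by
  obtain ⟨s, hs, t, ht, p, hp, hw⟩ := hS.exists_walk w
  rcases p.eq_or_eq_of_isClique_neighborSet hp hw hc with rfl | rfl
  exacts [hs, ht]

theorem IsStrongGeodeticSet.exists_dist_add_dist_eq {S : Set V} (hS : IsStrongGeodeticSet G S)
    {w : V} (hw : w ∉ S) : ∃ s ∈ S, ∃ t ∈ S,
      0 < G.dist s w ∧ 0 < G.dist w t ∧ G.dist s w + G.dist w t = G.dist s t := by
  obtain ⟨s, hs, t, ht, p, hp, hwp⟩ := hS.exists_walk w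
  obtain ⟨n, rfl, hn⟩ := Walk.mem_support_iff_exists_getVert.1 hwp
  have h0 : n ≠ 0 := by rintro rfl; exact hw (by rwa [p.getVert_zero])
  have hl : n ≠ p.length := by rintro rfl; exact hw (by rwa [p.getVert_length])
  have hsw := p.dist_getVert_getVert hp (Nat.zero_le n) hn
  have hwt := p.dist_getVert_getVert hp hn le_rfl
  rw [Walk.getVert_zero] at hsw
  rw [Walk.getVert_length] at hwt
  exact ⟨s, hs, t, ht, by omega, by omega, by omega⟩

end StrongGeodetic

section GPrime

variable {V : Type*} {G : SimpleGraph V} {X Y : Set V}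

theorem gPrime_adj_hub_hub {b b' : Bool} (h : b ≠ b') :
    (gPrime G X Y).Adj (Sum.inr (Sum.inr b)) (Sum.inr (Sum.inr b')) := by
  cases b <;> cases b' <;> simp_all [gPrime, gPrimeRel]

theorem gPrime_dist_hub_hub_le_one (b b' : Bool) :
    (gPrime G X Y).dist (Sum.inr (Sum.inr b)) (Sum.inr (Sum.inr b')) ≤ 1 := by
  by_cases h : b = b'
  · simp [h]
  · exact (dist_eq_one_iff_adj.2 (gPrime_adj_hub_hub h)).le

theorem gPrime_exists_hub_adj (hunion : X ∪ Y = Set.univ) (v : V) :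
    ∃ b, (gPrime G X Y).Adj (Sum.inr (Sum.inr b)) (Sum.inl v) ∧
      (gPrime G X Y).Adj (Sum.inr (Sum.inr b)) (copyOf v) := by
  have hv : v ∈ X ∪ Y := hunion ▸ Set.mem_univ v
  rcases hv with hv | hv
  · exact ⟨true, by simp [gPrime, gPrimeRel, copyOf, hv]⟩
  · exact ⟨false, by simp [gPrime, gPrimeRel, copyOf, hv]⟩

theorem gPrime_dist_hub_le_two (hunion : X ∪ Y = Set.univ) (b : Bool) (t : V ⊕ V ⊕ Bool) :
    (gPrime G X Y).dist (Sum.inr (Sum.inr b)) t ≤ 2 := by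
  have via_hub : ∀ {b'} (h : (gPrime G X Y).Adj (Sum.inr (Sum.inr b')) t),
      (gPrime G X Y).dist (Sum.inr (Sum.inr b)) t ≤ 2 := by
    intro b' h
    by_cases hb : b = b'
    · subst hb
      exact (dist_eq_one_iff_adj.2 h).trans_le one_le_two
    · exact dist_le (.cons (gPrime_adj_hub_hub hb) (.cons h .nil))
  rcases t with v | v | b'
  · obtain ⟨b', h, -⟩ := gPrime_exists_hub_adj hunion v
    exact via_hub h
  · obtain ⟨b', -, h⟩ := gPrime_exists_hub_adj hunion v
    exact via_hub h
  · exact (gPrime_dist_hub_hub_le_one b b').trans one_le_two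

theorem gPrime_dist_le_three (hunion : X ∪ Y = Set.univ) (s t : V ⊕ V ⊕ Bool) :
    (gPrime G X Y).dist s t ≤ 3 := by
  have via_hub : ∀ {b} (h : (gPrime G X Y).Adj s (Sum.inr (Sum.inr b))),
      (gPrime G X Y).dist s t ≤ 3 := by
    intro b h
    have := h.reachable.dist_triangle_left t
    rw [dist_eq_one_iff_adj.2 h] at this
    have := gPrime_dist_hub_le_two (G := G) hunion b t
    omega
  rcases s with v | v | b
  · obtain ⟨b, h, -⟩ := gPrime_exists_hub_adj hunion v
    exact via_hub h.symm
  · obtain ⟨b, -, h⟩ := gPrime_exists_hub_adj hunion v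
    exact via_hub h.symm
  · exact (gPrime_dist_hub_le_two hunion b t).trans (by norm_num)

theorem gPrime_adj_inl {w : V ⊕ V ⊕ Bool} {v : V} (h : (gPrime G X Y).Adj w (Sum.inl v)) :
    (∃ u, w = Sum.inl u ∧ G.Adj u v) ∨ ∃ b, w = Sum.inr (Sum.inr b) := by
  rcases w with u | u | b
  · simp only [gPrime, fromRel_adj, gPrimeRel] at h
    exact Or.inl ⟨u, rfl, h.2.elim id .symm⟩
  · simp [gPrime, gPrimeRel] at h
  · exact Or.inr ⟨b, rfl⟩

theorem gPrime_isClique_neighborSet_copyOf (v : V) :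
    (gPrime G X Y).IsClique ((gPrime G X Y).neighborSet (copyOf v)) := by
  have hub : ∀ w ∈ (gPrime G X Y).neighborSet (copyOf v), ∃ b, w = Sum.inr (Sum.inr b) := by
    rintro (u | u | b) h
    all_goals simp_all [gPrime, gPrimeRel, copyOf]
  intro a ha b hb hab
  obtain ⟨i, rfl⟩ := hub a ha
  obtain ⟨j, rfl⟩ := hub b hb
  exact gPrime_adj_hub_hub (by rintro rfl; exact hab rfl)

theorem gPrime_exists_endpoint_adj (hunion : X ∪ Y = Set.univ) {s t : V ⊕ V ⊕ Bool} {v : V}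
    (hs : (gPrime G X Y).dist s (Sum.inl v) = 1) (ht : 0 < (gPrime G X Y).dist (Sum.inl v) t)
    (hst : (gPrime G X Y).dist s (Sum.inl v) + (gPrime G X Y).dist (Sum.inl v) t =
      (gPrime G X Y).dist s t) :
    ∃ u, (Sum.inl u = s ∨ Sum.inl u = t) ∧ G.Adj u v := by
  rcases gPrime_adj_inl (dist_eq_one_iff_adj.1 hs) with ⟨u, rfl, huv⟩ | ⟨b, rfl⟩
  · exact ⟨u, Or.inl rfl, huv⟩
  have := gPrime_dist_hub_le_two (G := G) hunion b t
  have hvt : (gPrime G X Y).Adj t (Sum.inl v) := dist_eq_one_iff_adj.1 (by rw [dist_comm]; omega)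
  rcases gPrime_adj_inl hvt with ⟨u, rfl, huv⟩ | ⟨b', rfl⟩
  · exact ⟨u, Or.inr rfl, huv⟩
  · have := gPrime_dist_hub_hub_le_one (G := G) (X := X) (Y := Y) b b'
    omega

theorem IsStrongGeodeticSet.gPrime_exists_adj (hunion : X ∪ Y = Set.univ)
    {D : Set (V ⊕ V ⊕ Bool)} (hD : IsStrongGeodeticSet (gPrime G X Y) D) {v : V}
    (hv : Sum.inl v ∉ D) : ∃ u, Sum.inl u ∈ D ∧ G.Adj u v := by
  obtain ⟨s, hs, t, ht, hsv, hvt, hst⟩ := hD.exists_dist_add_dist_eq hv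
  have := gPrime_dist_le_three (G := G) hunion s t
  obtain ⟨u, hu, huv⟩ : ∃ u, (Sum.inl u = s ∨ Sum.inl u = t) ∧ G.Adj u v := by
    rcases (by omega : (gPrime G X Y).dist s (Sum.inl v) = 1 ∨
        (gPrime G X Y).dist (Sum.inl v) t = 1) with h | h
    · exact gPrime_exists_endpoint_adj hunion h hvt hst
    · rw [dist_comm] at h hsv
      rw [dist_comm (u := s), dist_comm (u := s) (v := t), dist_comm (v := t)] at hst
      obtain ⟨u, hu, huv⟩ := gPrime_exists_endpoint_adj hunion h hsv (by omega)
      exact ⟨u, hu.symm, huv⟩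
  exact ⟨u, hu.elim (· ▸ hs) (· ▸ ht), huv⟩

theorem ncard_setOf_inl_mem_add_card_le [Finite V] {D : Set (V ⊕ V ⊕ Bool)}
    (hD : ∀ v, copyOf v ∈ D) : {u : V | Sum.inl u ∈ D}.ncard + Nat.card V ≤ D.ncard := by
  have hinj : Function.Injective (copyOf : V → V ⊕ V ⊕ Bool) := fun a b h => by
    simpa [copyOf] using h
  have hdisj : Disjoint (Sum.inl '' {u : V | Sum.inl u ∈ D}) (Set.range copyOf) := by
    rw [Set.disjoint_left]
    rintro _ ⟨u, -, rfl⟩ ⟨w, h⟩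
    simp [copyOf] at h
  have hsub : Sum.inl '' {u : V | Sum.inl u ∈ D} ∪ Set.range copyOf ⊆ D := by
    rintro _ (⟨u, hu, rfl⟩ | ⟨u, rfl⟩)
    exacts [hu, hD u]
  calc {u : V | Sum.inl u ∈ D}.ncard + Nat.card V
      = (Sum.inl '' {u : V | Sum.inl u ∈ D}).ncard + (Set.range copyOf).ncard := by
        rw [Set.ncard_image_of_injective _ Sum.inl_injective, Set.ncard_range_of_injective hinj]
    _ = (Sum.inl '' {u : V | Sum.inl u ∈ D} ∪ Set.range copyOf).ncard :=
        (Set.ncard_union_eq hdisj).symm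
    _ ≤ D.ncard := Set.ncard_le_ncard hsub

end GPrime

theorem strong_geodetic_gives_dominating_general {V : Type*} [Fintype V]
    (G : SimpleGraph V) (X Y : Set V)
    (hunion : X ∪ Y = Set.univ)
    (D' : Set (V ⊕ V ⊕ Bool)) (k : ℕ)
    (hsgs : IsStrongGeodeticSet (gPrime G X Y) D')
    (hcard : D'.ncard ≤ k + Nat.card V) :
    (∀ v : V, v ∉ {u : V | Sum.inl u ∈ D'} → ∃ u ∈ {u : V | Sum.inl u ∈ D'}, G.Adj u v) ∧
      {u : V | Sum.inl u ∈ D'}.ncard ≤ k := by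
  have hcopies : ∀ v, copyOf v ∈ D' := fun v =>
    hsgs.mem_of_isClique_neighborSet (gPrime_isClique_neighborSet_copyOf v)
  refine ⟨fun v hv => hsgs.gPrime_exists_adj hunion hv, ?_⟩
  have := ncard_setOf_inl_mem_add_card_le hcopies
  omega

/-- If `D'` is a strong geodetic set of `G'` of size at most `k + |V(G)|`, then
`D' ∩ V(G)` is a dominating set of `G` of size at most `k`. -/
theorem strong_geodetic_gives_dominating {V : Type*} [Fintype V]
    (G : SimpleGraph V) (X Y : Set V) (hX : X.Nonempty) (hY : Y.Nonempty)
    (hunion : X ∪ Y = Set.univ) (hdisj : X ∩ Y = ∅)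
    (hbip : ∀ u v, G.Adj u v → (u ∈ X ∧ v ∈ Y) ∨ (u ∈ Y ∧ v ∈ X))
    (D' : Set (V ⊕ V ⊕ Bool)) (k : ℕ)
    (hsgs : IsStrongGeodeticSet (gPrime G X Y) D')
    (hcard : D'.ncard ≤ k + Nat.card V) :
    (∀ v : V, v ∉ {u : V | Sum.inl u ∈ D'} → ∃ u ∈ {u : V | Sum.inl u ∈ D'}, G.Adj u v) ∧
      {u : V | Sum.inl u ∈ D'}.ncard ≤ k :=
  strong_geodetic_gives_dominating_general G X Y hunion D' k hsgs hcard
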